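/- arXiv:1309.7676 — 4 statements merged into one kernel-verified Lean document; each statement's English description precedes it below -/
import Mathlib

section
/- If a labeled dataset T is separable with margin δ > 0 and has radius at most R under a feature map φ, then the multiclass perceptron algorithm run on T updates its weight vector at most R²/δ² times. -/
open Finset Filter
open scoped RealInnerProductSpace

noncomputable section

/-- Points in `ℝ^d`. -/
abbrev Pt (d : ℕ) := EuclideanSpace ℝ (Fin d)

variable {d : ℕ}

/-- `q` is the unique nearest neighbor (by Euclidean distance) of `x` in `P`. -/
def IsNN {C : Type*} (P : Finset (Pt d × C)) (x : Pt d) (q : Pt d × C) : Prop :=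
  q ∈ P ∧ ∀ r ∈ P, r ≠ q → dist x q.1 < dist x r.1

/-- `p` is misclassified by the nearest-neighbor rule of prototype set `P`
(in particular when `P = ∅`, where the rule is undefined). -/
def Misclassified {C : Type*} (P : Finset (Pt d × C)) (p : Pt d × C) : Prop :=
  P = ∅ ∨ ∃ q, IsNN P p.1 q ∧ q.2 ≠ p.2

/-- One step of the CNN algorithm: some point of `T` misclassified by `P` is added. -/
def CNNStep {C : Type*} [DecidableEq C] [DecidableEq (Pt d)]
    (T P P' : Finset (Pt d × C)) : Prop :=
  ∃ p ∈ T, Misclassified P p ∧ P' = insert p P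

/-- `w` is a restricted vector corresponding to `P ⊆ T`:
`w = Σ_{(x,c)∈P} (φ(x,c) − φ(x,o(x)))` for some `o` with `o x ≠ c` for all `(x,c) ∈ T`. -/
def Restricted {C H : Type*} [NormedAddCommGroup H] [InnerProductSpace ℝ H]
    (φ : Pt d → C → H) (T P : Finset (Pt d × C)) (w : H) : Prop :=
  ∃ o : Pt d → C, (∀ p ∈ T, o p.1 ≠ p.2) ∧
    w = ∑ p ∈ P, (φ p.1 p.2 - φ p.1 (o p.1))

/-- `φ` is neighborly w.r.t. `T`: for every `P ⊆ T`, every restricted `w` corresponding to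
`P`, and every training point, `argmax_y ⟪w, φ x y⟫` is the class of the nearest neighbor
of `x` in `P`. -/
def Neighborly {C H : Type*} [NormedAddCommGroup H] [InnerProductSpace ℝ H]
    (φ : Pt d → C → H) (T : Finset (Pt d × C)) : Prop :=
  ∀ P ⊆ T, ∀ w : H, Restricted φ T P w → ∀ p ∈ T, ∀ q, IsNN P p.1 q →
    ∀ y, y ≠ q.2 → ⟪w, φ p.1 y⟫ < ⟪w, φ p.1 q.2⟫

theorem le_div_sq_of_mul_le_of_sq_le {k a δ R : ℝ} (hk : 0 ≤ k) (hδ : 0 < δ)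
    (hlow : k * δ ≤ a) (hup : a ^ 2 ≤ k * R ^ 2) : k ≤ R ^ 2 / δ ^ 2 := by
  have hsq : (k * δ) ^ 2 ≤ k * R ^ 2 := (pow_le_pow_left₀ (by positivity) hlow 2).trans hup
  rw [le_div_iff₀ (by positivity)]
  rcases hk.eq_or_lt with rfl | hkpos
  · simpa using sq_nonneg R
  · nlinarith

section Increments

variable {H : Type*} [NormedAddCommGroup H] [InnerProductSpace ℝ H] {w : ℕ → H} {k : ℕ}

theorem nat_mul_le_inner_of_le_inner_increment {v : H} {δ : ℝ} (hw0 : w 0 = 0)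
    (h : ∀ i < k, δ ≤ ⟪v, w (i + 1) - w i⟫) : k * δ ≤ ⟪v, w k⟫ := by
  have htel : w k = ∑ i ∈ range k, (w (i + 1) - w i) := by
    rw [sum_range_sub, hw0, sub_zero]
  rw [htel, inner_sum]
  calc (k : ℝ) * δ = ∑ _i ∈ range k, δ := by simp
    _ ≤ _ := sum_le_sum fun i hi => h i (mem_range.1 hi)

theorem norm_sq_le_of_inner_increment_nonpos {R : ℝ} (hw0 : w 0 = 0)
    (hinner : ∀ i < k, ⟪w i, w (i + 1) - w i⟫ ≤ 0) (hnorm : ∀ i < k, ‖w (i + 1) - w i‖ ≤ R) :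
    ‖w k‖ ^ 2 ≤ k * R ^ 2 := by
  induction k with
  | zero => simp [hw0]
  | succ n ih =>
    have hexpand : ‖w (n + 1)‖ ^ 2 =
        ‖w n‖ ^ 2 + 2 * ⟪w n, w (n + 1) - w n⟫ + ‖w (n + 1) - w n‖ ^ 2 := by
      rw [← norm_add_sq_real, add_sub_cancel]
    have hprev := ih (fun i hi => hinner i (by omega)) (fun i hi => hnorm i (by omega))
    have hlast := pow_le_pow_left₀ (norm_nonneg _) (hnorm n n.lt_succ_self) 2
    push_cast
    linarith [hinner n n.lt_succ_self]

/-- Novikoff's argument: `⟪v, w k⟫` grows by at least `δ` per step while `‖w k‖²` grows by at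
most `R²`, so `kδ ≤ ‖w k‖ ≤ √k R`. -/
theorem nat_le_div_sq_of_increments {v : H} {δ R : ℝ} (hv : ‖v‖ ≤ 1) (hδ : 0 < δ) (hw0 : w 0 = 0)
    (hmargin : ∀ i < k, δ ≤ ⟪v, w (i + 1) - w i⟫)
    (hinner : ∀ i < k, ⟪w i, w (i + 1) - w i⟫ ≤ 0)
    (hnorm : ∀ i < k, ‖w (i + 1) - w i‖ ≤ R) :
    (k : ℝ) ≤ R ^ 2 / δ ^ 2 := by
  have hcs : ⟪v, w k⟫ ≤ ‖w k‖ :=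
    (real_inner_le_norm _ _).trans (mul_le_of_le_one_left (norm_nonneg _) hv)
  exact le_div_sq_of_mul_le_of_sq_le k.cast_nonneg hδ
    ((nat_mul_le_inner_of_le_inner_increment hw0 hmargin).trans hcs)
    (norm_sq_le_of_inner_increment_nonpos hw0 hinner hnorm)

end Increments

/-- If `T` is separable with margin `δ > 0` and has radius at most `R` under
`φ`, then any run of the multiclass perceptron makes at most `R²/δ²` updates. -/
theorem perceptron_mistake_bound {C H : Type*} [NormedAddCommGroup H] [InnerProductSpace ℝ H]
    (φ : Pt d → C → H) (T : Finset (Pt d × C)) (δ R : ℝ) (hδ : 0 < δ)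
    (hmargin : ∃ wstar : H, ‖wstar‖ = 1 ∧
      ∀ p ∈ T, ∀ y, y ≠ p.2 → δ ≤ ⟪wstar, φ p.1 p.2 - φ p.1 y⟫)
    (hradius : ∀ p ∈ T, ∀ y, y ≠ p.2 → ‖φ p.1 p.2 - φ p.1 y‖ ≤ R)
    (k : ℕ) (w : ℕ → H) (hw0 : w 0 = 0)
    (hupd : ∀ i < k, ∃ p ∈ T, ∃ y, y ≠ p.2 ∧
      (∀ y', ⟪w i, φ p.1 y'⟫ ≤ ⟪w i, φ p.1 y⟫) ∧
      w (i + 1) = w i + φ p.1 p.2 - φ p.1 y) :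
    (k : ℝ) ≤ R ^ 2 / δ ^ 2 := by
  obtain ⟨wstar, hwstar, hsep⟩ := hmargin
  refine nat_le_div_sq_of_increments hwstar.le hδ hw0 ?_ ?_ ?_ <;> intro i hi <;>
    obtain ⟨p, hp, y, hy, hmax, hstep⟩ := hupd i hi <;>
    rw [hstep, add_sub_assoc, add_sub_cancel_left]
  · exact hsep p hp y hy
  · rw [inner_sub_right]
    linarith [hmax p.2]
  · exact hradius p hp y hy
end
end

section
/- Let ψ_σ be the Gaussian kernel feature map with ψ_σ(x)·ψ_σ(x') = exp(−‖x−x'‖²/(2σ²)), and define φ_σ(x,c) by interleaving the coordinates of ψ_σ(x) into the slots indexed by class c so that φ_σ(x,c)·φ_σ(x',c') = 1[c=c']·exp(−‖x−x'‖²/(2σ²)). Then for any fixed subset P ⊆ T, any restricted w corresponding to P, and any (x',c') ∈ T, there exists σ* > 0 such that for all 0 < σ < σ*, argmax_{y∈C} w·φ_σ(x',y) = C_P(x'). -/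
open Finset Filter
open scoped RealInnerProductSpace

noncomputable section

variable {d : ℕ}

/-
As `σ → 0`, the Gaussian weight `exp (-‖p - x'‖² / (2σ²))` of the nearest prototype `q`
dominates the sum of the weights of all other prototypes by an arbitrarily large factor. The
score gap `⟪w, φ x' q.2⟫ - ⟪w, φ x' y⟫` is a combination of these weights whose coefficient at
`q` is at least `1` (because `o q.1 ≠ q.2`) and whose other coefficients are at least `-2`, so
it is positive for small `σ`.
-/

open Real Topology

lemma tendsto_exp_neg_div_nhdsGT_zero {b : ℝ} (hb : 0 < b) :
    Tendsto (fun ε : ℝ => exp (-b / ε)) (𝓝[>] 0) (𝓝 0) := by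
  have h : Tendsto (fun ε : ℝ => -b / ε) (𝓝[>] 0) atBot := by
    simpa only [div_eq_mul_inv] using
      tendsto_inv_nhdsGT_zero.const_mul_atTop_of_neg (neg_lt_zero.2 hb)
  exact tendsto_exp_atBot.comp h

lemma eventually_pos_sum_mul_exp_of_dominant {ι : Type*} [DecidableEq ι] {s : Finset ι} {i : ι}
    (hi : i ∈ s) {d : ι → ℝ} (hd : ∀ j ∈ s, j ≠ i → d i < d j) {α : ℝ} (hα : 0 < α) (β : ℝ) :
    ∀ᶠ ε in 𝓝[>] 0, ∀ a : ι → ℝ, α ≤ a i → (∀ j ∈ s, j ≠ i → -β ≤ a j) →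
      0 < ∑ j ∈ s, a j * exp (-d j / ε) := by
  have hratio : Tendsto (fun ε : ℝ => β * ∑ j ∈ s.erase i, exp (-(d j - d i) / ε))
      (𝓝[>] 0) (𝓝 (β * ∑ j ∈ s.erase i, 0)) :=
    (tendsto_finsetSum _ fun j hj => tendsto_exp_neg_div_nhdsGT_zero
      (sub_pos.2 (hd j (mem_of_mem_erase hj) (ne_of_mem_erase hj)))).const_mul β
  rw [sum_const_zero, mul_zero] at hratio
  filter_upwards [hratio.eventually_lt_const hα] with ε hε a hai haj
  have hsplit : ∀ j, exp (-d i / ε) * exp (-(d j - d i) / ε) = exp (-d j / ε) := fun j => by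
    rw [← exp_add]; ring_nf
  calc 0 < exp (-d i / ε) * (α - β * ∑ j ∈ s.erase i, exp (-(d j - d i) / ε)) :=
        mul_pos (exp_pos _) (sub_pos.2 hε)
    _ = α * exp (-d i / ε) + ∑ j ∈ s.erase i, -β * exp (-d j / ε) := by
        rw [mul_sub, mul_left_comm, mul_sum]
        simp only [hsplit, ← mul_sum]
        ring
    _ ≤ a i * exp (-d i / ε) + ∑ j ∈ s.erase i, a j * exp (-d j / ε) := by
        gcongr with j hj
        exact haj j (mem_of_mem_erase hj) (ne_of_mem_erase hj)
    _ = ∑ j ∈ s, a j * exp (-d j / ε) := add_sum_erase s (fun j => a j * exp (-d j / ε)) hi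

section Vote

variable {C : Type*} [DecidableEq C]

def vote (c o y : C) : ℝ :=
  (if c = y then 1 else 0) - (if o = y then 1 else 0)

lemma neg_two_le_vote_sub_vote (c o z y : C) :
    -2 ≤ vote c o z - vote c o y := by
  unfold vote; split_ifs <;> norm_num

lemma one_le_vote_self_sub_vote {c o y : C} (ho : o ≠ c) (hy : y ≠ c) :
    1 ≤ vote c o c - vote c o y := by
  unfold vote; split_ifs <;> simp_all

lemma inner_sum_sub_eq_sum_vote_mul {α H : Type*} [NormedAddCommGroup H] [InnerProductSpace ℝ H]
    {φ : α → C → H} {k : α → α → ℝ}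
    (hφ : ∀ x x' c c', ⟪φ x c, φ x' c'⟫ = (if c = c' then 1 else 0) * k x x')
    (P : Finset (α × C)) (o : α → C) (x' : α) (y : C) :
    ⟪∑ p ∈ P, (φ p.1 p.2 - φ p.1 (o p.1)), φ x' y⟫ =
      ∑ p ∈ P, vote p.2 (o p.1) y * k p.1 x' := by
  simp only [sum_inner, inner_sub_left, hφ, vote, sub_mul]

end Vote

lemma tendsto_two_mul_sq_nhdsGT_zero :
    Tendsto (fun σ : ℝ => 2 * σ ^ 2) (𝓝[>] 0) (𝓝[>] 0) := by
  refine tendsto_nhdsWithin_of_tendsto_nhds_of_eventually_within _ ?_ ?_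
  · have h : Continuous (fun σ : ℝ => 2 * σ ^ 2) := by fun_prop
    simpa using (h.tendsto 0).mono_left nhdsWithin_le_nhds
  · filter_upwards [self_mem_nhdsWithin] with σ (hσ : 0 < σ)
    exact (by positivity : (0 : ℝ) < 2 * σ ^ 2)

lemma sq_norm_sub_lt_of_isNN {C : Type*} {P : Finset (Pt d × C)} {x : Pt d} {q : Pt d × C}
    (hq : IsNN P x q) : ∀ p ∈ P, p ≠ q → ‖q.1 - x‖ ^ 2 < ‖p.1 - x‖ ^ 2 := fun p hp hpq => by
  have h := hq.2 p hp hpq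
  rw [dist_comm, dist_eq_norm, dist_comm, dist_eq_norm] at h
  gcongr

theorem gaussian_restricted_argmax_general {C H : Type*} [DecidableEq C]
    [NormedAddCommGroup H] [InnerProductSpace ℝ H]
    (φ : ℝ → Pt d → C → H)
    (hker : ∀ σ : ℝ, 0 < σ → ∀ x x' : Pt d, ∀ c c' : C,
      ⟪φ σ x c, φ σ x' c'⟫ =
        (if c = c' then (1 : ℝ) else 0) * Real.exp (-‖x - x'‖ ^ 2 / (2 * σ ^ 2)))
    (T P : Finset (Pt d × C)) (hPT : P ⊆ T)
    (o : Pt d → C) (ho : ∀ p ∈ T, o p.1 ≠ p.2)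
    (x' : Pt d) (c' : C)
    (q : Pt d × C) (hq : IsNN P x' q) :
    ∃ σstar > (0 : ℝ), ∀ σ : ℝ, 0 < σ → σ < σstar → ∀ y, y ≠ q.2 →
      ⟪∑ p ∈ P, (φ σ p.1 p.2 - φ σ p.1 (o p.1)), φ σ x' y⟫ <
      ⟪∑ p ∈ P, (φ σ p.1 p.2 - φ σ p.1 (o p.1)), φ σ x' q.2⟫ := by
  classical
  have hev := tendsto_two_mul_sq_nhdsGT_zero.eventually <|
    eventually_pos_sum_mul_exp_of_dominant (d := fun p => ‖p.1 - x'‖ ^ 2) hq.1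
      (sq_norm_sub_lt_of_isNN hq) one_pos 2
  obtain ⟨σstar, hσstar, hsub⟩ := mem_nhdsGT_iff_exists_Ioo_subset.1 hev
  refine ⟨σstar, hσstar, fun σ hσ hσlt y hy => ?_⟩
  rw [inner_sum_sub_eq_sum_vote_mul (hker σ hσ), inner_sum_sub_eq_sum_vote_mul (hker σ hσ),
    ← sub_pos, ← sum_sub_distrib]
  simp only [← sub_mul]
  exact hsub ⟨hσ, hσlt⟩ (fun p => vote p.2 (o p.1) q.2 - vote p.2 (o p.1) y)
    (one_le_vote_self_sub_vote (ho q (hPT hq.1)) hy)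
    (fun p _ _ => neg_two_le_vote_sub_vote _ _ _ _)

/-- For the class-interleaved Gaussian feature maps `φ σ`, for any fixed
`P ⊆ T`, restricted `w` corresponding to `P`, and training point `(x', c') ∈ T`, there is a
`σ* > 0` such that for all `0 < σ < σ*`, `argmax_y ⟪w, φ σ x' y⟫ = C_P(x')`. -/
theorem gaussian_restricted_argmax {C H : Type*} [DecidableEq C]
    [NormedAddCommGroup H] [InnerProductSpace ℝ H]
    (φ : ℝ → Pt d → C → H)
    (hker : ∀ σ : ℝ, 0 < σ → ∀ x x' : Pt d, ∀ c c' : C,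
      ⟪φ σ x c, φ σ x' c'⟫ =
        (if c = c' then (1 : ℝ) else 0) * Real.exp (-‖x - x'‖ ^ 2 / (2 * σ ^ 2)))
    (T P : Finset (Pt d × C)) (hPT : P ⊆ T)
    (o : Pt d → C) (ho : ∀ p ∈ T, o p.1 ≠ p.2)
    (x' : Pt d) (c' : C) (hx' : (x', c') ∈ T)
    (q : Pt d × C) (hq : IsNN P x' q) :
    ∃ σstar > (0 : ℝ), ∀ σ : ℝ, 0 < σ → σ < σstar → ∀ y, y ≠ q.2 →
      ⟪∑ p ∈ P, (φ σ p.1 p.2 - φ σ p.1 (o p.1)), φ σ x' y⟫ <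
      ⟪∑ p ∈ P, (φ σ p.1 p.2 - φ σ p.1 (o p.1)), φ σ x' q.2⟫ :=
  gaussian_restricted_argmax_general φ hker T P hPT o ho x' c' q hq
end
end

section
/- For any finite labeled training set T (with unique nearest neighbors and consistent labeling), there exist uncountably many values σ > 0 for which the class-interleaved Gaussian feature map φ_σ is neighborly with respect to T; in particular, there exists σ^min > 0 such that every σ ∈ (0, σ^min) yields a neighborly φ_σ. -/
/-!
Let `δ > 0` be the smallest positive gap `d(a, r)² - d(a, q)²` among training points.
For a training point `x` whose nearest prototype in `P` is `q`, the score margin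
`⟪w, φ σ x q.2⟫ - ⟪w, φ σ x y⟫` is a sum over prototypes `p` of coefficients in `[-2, 2]` times
Gaussian weights `exp (-‖p - x‖² / 2σ²)`; the coefficient of `q` is at least `1`, and every other
weight is at most `exp (-δ / 2σ²)` times that of `q`. Hence the `q` term dominates as soon as
`2 |T| exp (-δ / 2σ²) < 1`, which holds on a whole interval `(0, σmin)`.
-/

open Finset Filter
open scoped RealInnerProductSpace

noncomputable section

variable {d : ℕ}

open Topology

theorem exists_pos_forall_add_le_of_lt {ι : Type*} (s : Finset ι) (f g : ι → ℝ) :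
    ∃ δ > 0, ∀ i ∈ s, f i < g i → f i + δ ≤ g i := by
  have hgap : ∀ᶠ δ in 𝓝[>] (0 : ℝ), ∀ i ∈ s, f i < g i → f i + δ ≤ g i := by
    refine (eventually_all_finset s).2 fun i _ => ?_
    by_cases hi : f i < g i
    · filter_upwards [nhdsWithin_le_nhds (eventually_lt_nhds (sub_pos.2 hi))] with δ hδ
      intro _
      linarith
    · exact Eventually.of_forall fun _ h => absurd h hi
  exact (hgap.and self_mem_nhdsWithin).exists.imp fun δ h => ⟨h.2, h.1⟩

theorem exists_pos_sq_dist_gap {X : Type*} [PseudoMetricSpace X] (s : Finset X) :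
    ∃ δ > 0, ∀ a ∈ s, ∀ b ∈ s, ∀ c ∈ s,
      dist a b < dist a c → dist a b ^ 2 + δ ≤ dist a c ^ 2 := by
  obtain ⟨δ, hδ, hgap⟩ := exists_pos_forall_add_le_of_lt (s ×ˢ s ×ˢ s)
    (fun t => dist t.1 t.2.1 ^ 2) (fun t => dist t.1 t.2.2 ^ 2)
  refine ⟨δ, hδ, fun a ha b hb c hc hlt => hgap (a, b, c) (by simp [ha, hb, hc]) ?_⟩
  exact pow_lt_pow_left₀ hlt dist_nonneg two_ne_zero

theorem exp_neg_sq_div_le_mul_of_sq_add_le {r s δ σ : ℝ} (h : r ^ 2 + δ ≤ s ^ 2) :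
    Real.exp (-s ^ 2 / (2 * σ ^ 2)) ≤
      Real.exp (-r ^ 2 / (2 * σ ^ 2)) * Real.exp (-δ / (2 * σ ^ 2)) := by
  rw [← Real.exp_add, Real.exp_le_exp, ← add_div]
  exact div_le_div_of_nonneg_right (by linarith) (by positivity)

theorem eventually_mul_exp_neg_div_sq_lt_one (c : ℝ) {δ : ℝ} (hδ : 0 < δ) :
    ∀ᶠ σ in 𝓝[>] (0 : ℝ), c * Real.exp (-δ / (2 * σ ^ 2)) < 1 := by
  have hsq : Tendsto (fun σ : ℝ => 2 * σ ^ 2) (𝓝[>] 0) (𝓝[>] 0) := by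
    refine tendsto_nhdsWithin_of_tendsto_nhds_of_eventually_within _ ?_ ?_
    · exact ((continuous_const.mul (continuous_pow 2)).tendsto' 0 0 (by simp)).mono_left
        nhdsWithin_le_nhds
    · filter_upwards [self_mem_nhdsWithin] with σ (hσ : 0 < σ)
      exact Set.mem_Ioi.2 (by positivity)
  have hexp : Tendsto (fun σ : ℝ => Real.exp (-δ / (2 * σ ^ 2))) (𝓝[>] 0) (𝓝 0) := by
    refine (Real.tendsto_exp_neg_atTop_nhds_zero.comp
      (hsq.inv_tendsto_nhdsGT_zero.const_mul_atTop hδ)).congr fun σ => ?_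
    simp [div_eq_mul_inv]
  simpa using (hexp.const_mul c).eventually (eventually_lt_nhds (by simp : c * 0 < 1))

theorem sum_mul_pos_of_dominant {ι : Type*} [DecidableEq ι] {s : Finset ι} {i : ι} (hi : i ∈ s)
    {g E : ι → ℝ} {b η : ℝ} (hb : 0 ≤ b) (hη : 0 ≤ η) (hgi : 1 ≤ g i)
    (hg : ∀ j ∈ s, -b ≤ g j) (hEi : 0 < E i) (hE : ∀ j ∈ s, 0 ≤ E j)
    (hdom : ∀ j ∈ s, j ≠ i → E j ≤ E i * η) (hsmall : b * #s * η < 1) :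
    0 < ∑ j ∈ s, g j * E j := by
  have hrest : ∀ j ∈ s.erase i, -(b * (E i * η)) ≤ g j * E j := by
    intro j hj
    obtain ⟨hji, hjs⟩ := mem_erase.1 hj
    calc -(b * (E i * η)) ≤ -b * E j := by nlinarith [hdom j hjs hji]
      _ ≤ g j * E j := mul_le_mul_of_nonneg_right (hg j hjs) (hE j hjs)
  have hrest_sum := card_nsmul_le_sum _ _ _ hrest
  rw [nsmul_eq_mul] at hrest_sum
  have hcard : (#(s.erase i) : ℝ) ≤ #s := by exact_mod_cast card_erase_le
  rw [← add_sum_erase s _ hi]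
  nlinarith [mul_le_mul_of_nonneg_right hcard (by positivity : 0 ≤ b * (E i * η))]

section KernelFeatureMap

variable {C H : Type*} [DecidableEq C] [NormedAddCommGroup H] [InnerProductSpace ℝ H]
  {ψ : Pt d → C → H} {K : Pt d → Pt d → ℝ}

theorem inner_sum_sub_eq_sum_mul_kernel
    (hK : ∀ x x' c c', ⟪ψ x c, ψ x' c'⟫ = (if c = c' then (1 : ℝ) else 0) * K x x')
    (P : Finset (Pt d × C)) (o : Pt d → C) (x : Pt d) (c : C) :
    ⟪∑ p ∈ P, (ψ p.1 p.2 - ψ p.1 (o p.1)), ψ x c⟫ =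
      ∑ p ∈ P, ((if p.2 = c then (1 : ℝ) else 0) - if o p.1 = c then 1 else 0) * K p.1 x := by
  rw [sum_inner]
  refine sum_congr rfl fun p _ => ?_
  rw [inner_sub_left, hK, hK, sub_mul]

theorem neighborly_of_kernel_decay
    (hK : ∀ x x' c c', ⟪ψ x c, ψ x' c'⟫ = (if c = c' then (1 : ℝ) else 0) * K x x')
    (hKpos : ∀ x x', 0 < K x x') {T : Finset (Pt d × C)} {η : ℝ} (hη : 0 ≤ η)
    (hdecay : ∀ a ∈ T, ∀ q ∈ T, ∀ r ∈ T, dist a.1 q.1 < dist a.1 r.1 →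
      K r.1 a.1 ≤ K q.1 a.1 * η)
    (hsmall : 2 * #T * η < 1) :
    Neighborly ψ T := by
  classical
  rintro P hPT w ⟨o, ho, rfl⟩ a ha q ⟨hqP, hqNN⟩ y hy
  rw [← sub_pos, inner_sum_sub_eq_sum_mul_kernel hK, inner_sum_sub_eq_sum_mul_kernel hK,
    ← sum_sub_distrib]
  simp_rw [← sub_mul]
  refine sum_mul_pos_of_dominant hqP zero_le_two hη ?_ (fun p _ => ?_) (hKpos _ _)
    (fun p _ => (hKpos _ _).le)
    (fun p hp hpq => hdecay a ha q (hPT hqP) p (hPT hp) (hqNN p hp hpq)) ?_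
  · simp only [if_neg (ho q (hPT hqP)), if_neg (Ne.symm hy)]
    split_ifs <;> norm_num
  · split_ifs <;> norm_num
  · calc 2 * #P * η ≤ 2 * #T * η := by gcongr
      _ < 1 := hsmall

end KernelFeatureMap

theorem gaussian_neighborly_general {C H : Type*} [DecidableEq C]
    [NormedAddCommGroup H] [InnerProductSpace ℝ H]
    (φ : ℝ → Pt d → C → H)
    (hker : ∀ σ : ℝ, 0 < σ → ∀ x x' : Pt d, ∀ c c' : C,
      ⟪φ σ x c, φ σ x' c'⟫ =
        (if c = c' then (1 : ℝ) else 0) * Real.exp (-‖x - x'‖ ^ 2 / (2 * σ ^ 2)))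
    (T : Finset (Pt d × C)) :
    (∃ σmin > (0 : ℝ), ∀ σ : ℝ, 0 < σ → σ < σmin → Neighborly (φ σ) T) ∧
    ¬ ({σ : ℝ | 0 < σ ∧ Neighborly (φ σ) T}).Countable := by
  obtain ⟨δ, hδ, hgap⟩ := exists_pos_sq_dist_gap (T.image Prod.fst)
  have hneighborly : ∀ᶠ σ in 𝓝[>] 0, Neighborly (φ σ) T := by
    filter_upwards [self_mem_nhdsWithin, eventually_mul_exp_neg_div_sq_lt_one (2 * #T) hδ]
      with σ (hσ : 0 < σ) hsmall
    refine neighborly_of_kernel_decay (K := fun x x' => Real.exp (-‖x - x'‖ ^ 2 / (2 * σ ^ 2)))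
      (hker σ hσ) (fun _ _ => Real.exp_pos _) (Real.exp_pos _).le
      (fun a ha q hq r hr hlt => ?_) hsmall
    simp only [← dist_eq_norm, dist_comm _ a.1]
    exact exp_neg_sq_div_le_mul_of_sq_add_le (hgap a.1 (mem_image_of_mem _ ha)
      q.1 (mem_image_of_mem _ hq) r.1 (mem_image_of_mem _ hr) hlt)
  obtain ⟨σmin, hσmin, hsub⟩ := mem_nhdsGT_iff_exists_Ioo_subset.1 hneighborly
  refine ⟨⟨σmin, hσmin, fun σ h₀ h₁ => hsub ⟨h₀, h₁⟩⟩, fun hcount => ?_⟩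
  have hIoo : Set.Ioo 0 σmin ⊆ {σ : ℝ | 0 < σ ∧ Neighborly (φ σ) T} :=
    fun σ hσ => ⟨hσ.1, hsub hσ⟩
  exact (Cardinal.Real.Ioo_countable_iff.1 (hcount.mono hIoo)).not_gt hσmin

/-- For any finite training set `T` (unique nearest neighbors, no conflicting
labels), there is a `σ^min > 0` such that `φ σ` is neighborly w.r.t. `T` for every
`σ ∈ (0, σ^min)`; in particular uncountably many `σ > 0` yield a neighborly `φ σ`. -/
theorem gaussian_neighborly {C H : Type*} [DecidableEq C]
    [NormedAddCommGroup H] [InnerProductSpace ℝ H]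
    (φ : ℝ → Pt d → C → H)
    (hker : ∀ σ : ℝ, 0 < σ → ∀ x x' : Pt d, ∀ c c' : C,
      ⟪φ σ x c, φ σ x' c'⟫ =
        (if c = c' then (1 : ℝ) else 0) * Real.exp (-‖x - x'‖ ^ 2 / (2 * σ ^ 2)))
    (T : Finset (Pt d × C))
    (hlabel : ∀ x : Pt d, ∀ c c' : C, (x, c) ∈ T → (x, c') ∈ T → c = c')
    (hNN : ∀ P ⊆ T, P.Nonempty → ∀ p ∈ T, ∃ q, IsNN P p.1 q) :
    (∃ σmin > (0 : ℝ), ∀ σ : ℝ, 0 < σ → σ < σmin → Neighborly (φ σ) T) ∧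
    ¬ ({σ : ℝ | 0 < σ ∧ Neighborly (φ σ) T}).Countable :=
  gaussian_neighborly_general φ hker T
end
end

section
/- Let P be a finite set of labeled points, x' a query point with unique nearest neighbor N_P(x') in P whose label is C_P(x'), and o a function assigning to each prototype a class different from its label. Define g_σ(y) = Σ_{(x,c)∈P}[I(c=y) − I(o(x)=y)]·exp(−‖x−x'‖²/(2σ²)). Then there exists σ* > 0 such that for all 0 < σ < σ*, g_σ(C_P(x')) > g_σ(y) for every class y ≠ C_P(x'). -/
open Finset Filter
open scoped RealInnerProductSpace

noncomputable section

variable {d : ℕ}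

/-
The vote difference `g_σ(C_P(x')) - g_σ(y)` is a combination of the Gaussian weights with
coefficient at least `1` on the nearest prototype and at least `-2` elsewhere. Relative to the
nearest prototype's weight, every other weight is `exp (-(r - r₀) / (2σ²))` with `r₀ < r`, which
tends to `0` as `σ → 0⁺`; so for small `σ` the nearest term outweighs all the others together.
-/

open Topology Real

theorem sum_mul_pos_of_dominant_s17 {ι : Type*} [DecidableEq ι] {s : Finset ι} {i₀ : ι}
    {a w : ι → ℝ} {B : ℝ} (hi₀ : i₀ ∈ s) (ha₀ : 1 ≤ a i₀) (ha : ∀ i ∈ s.erase i₀, -B ≤ a i)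
    (hw : ∀ i ∈ s, 0 ≤ w i) (hdom : B * ∑ i ∈ s.erase i₀, w i < w i₀) :
    0 < ∑ i ∈ s, a i * w i := by
  rw [← add_sum_erase _ _ hi₀]
  have hrest : -B * ∑ i ∈ s.erase i₀, w i ≤ ∑ i ∈ s.erase i₀, a i * w i := by
    rw [mul_sum]
    exact sum_le_sum fun i hi => mul_le_mul_of_nonneg_right (ha i hi) (hw i (mem_of_mem_erase hi))
  have hfirst : w i₀ ≤ a i₀ * w i₀ := le_mul_of_one_le_left (hw i₀ hi₀) ha₀
  linarith

theorem tendsto_exp_neg_div_sq_nhdsGT_zero {c : ℝ} (hc : 0 < c) :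
    Tendsto (fun σ : ℝ => exp (-c / (2 * σ ^ 2))) (𝓝[>] 0) (𝓝 0) := by
  have hexponent : Tendsto (fun σ : ℝ => -(c / 2) * (σ⁻¹) ^ 2) (𝓝[>] 0) atBot :=
    ((tendsto_pow_atTop two_ne_zero).comp tendsto_inv_nhdsGT_zero).const_mul_atTop_of_neg
      (by linarith)
  refine tendsto_exp_atBot.comp (hexponent.congr fun σ => ?_)
  simp only [inv_pow]
  ring

theorem eventually_mul_sum_exp_neg_div_sq_lt {ι : Type*} (s : Finset ι) (r : ι → ℝ) {r₀ : ℝ}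
    (B : ℝ) (h : ∀ i ∈ s, r₀ < r i) :
    ∀ᶠ σ in 𝓝[>] 0, B * ∑ i ∈ s, exp (-r i / (2 * σ ^ 2)) < exp (-r₀ / (2 * σ ^ 2)) := by
  have hlim : Tendsto (fun σ : ℝ => B * ∑ i ∈ s, exp (-(r i - r₀) / (2 * σ ^ 2)))
      (𝓝[>] 0) (𝓝 0) := by
    simpa using (tendsto_finsetSum s fun i hi =>
      tendsto_exp_neg_div_sq_nhdsGT_zero (sub_pos.2 (h i hi))).const_mul B
  filter_upwards [hlim.eventually (gt_mem_nhds one_pos)] with σ hσ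
  have hfactor : ∀ i, exp (-r i / (2 * σ ^ 2)) =
      exp (-(r i - r₀) / (2 * σ ^ 2)) * exp (-r₀ / (2 * σ ^ 2)) := fun i => by
    rw [← exp_add]
    ring_nf
  simp only [hfactor, ← sum_mul, ← mul_assoc]
  exact mul_lt_of_lt_one_left (exp_pos _) hσ

theorem neg_one_le_ite_sub_ite (p q : Prop) [Decidable p] [Decidable q] :
    -1 ≤ (if p then (1 : ℝ) else 0) - (if q then 1 else 0) := by
  split_ifs <;> norm_num

theorem ite_sub_ite_le_one (p q : Prop) [Decidable p] [Decidable q] :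
    (if p then (1 : ℝ) else 0) - (if q then 1 else 0) ≤ 1 := by
  split_ifs <;> norm_num

/-- In the small-bandwidth limit, the Gaussian-weighted vote
`g_σ(y) = Σ_{(x,c)∈P}[I(c=y) − I(o(x)=y)]·exp(−‖x−x'‖²/(2σ²))` is maximized, uniquely
among classes, at the label `C_P(x')` of the unique nearest neighbor of `x'` in `P`,
for all sufficiently small `σ > 0`. -/
theorem small_bandwidth_vote_dominance {C : Type*} [DecidableEq C]
    (P : Finset (Pt d × C)) (x' : Pt d) (N : Pt d × C) (hN : IsNN P x' N)
    (o : Pt d → C) (ho : ∀ p ∈ P, o p.1 ≠ p.2) :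
    ∃ σstar > (0 : ℝ), ∀ σ : ℝ, 0 < σ → σ < σstar → ∀ y : C, y ≠ N.2 →
      (∑ p ∈ P, ((if p.2 = y then (1 : ℝ) else 0) - (if o p.1 = y then 1 else 0)) *
        Real.exp (-‖p.1 - x'‖ ^ 2 / (2 * σ ^ 2))) <
      (∑ p ∈ P, ((if p.2 = N.2 then (1 : ℝ) else 0) - (if o p.1 = N.2 then 1 else 0)) *
        Real.exp (-‖p.1 - x'‖ ^ 2 / (2 * σ ^ 2))) := by
  obtain ⟨hNP, hnearest⟩ := hN
  have hfar : ∀ p ∈ P.erase N, ‖N.1 - x'‖ ^ 2 < ‖p.1 - x'‖ ^ 2 := fun p hp => by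
    have := hnearest p (mem_of_mem_erase hp) (ne_of_mem_erase hp)
    rw [dist_comm, dist_eq_norm, dist_comm, dist_eq_norm] at this
    gcongr
  obtain ⟨σstar, hσstar, hsmall⟩ := mem_nhdsGT_iff_exists_Ioo_subset.1
    (eventually_mul_sum_exp_neg_div_sq_lt (P.erase N) (fun p => ‖p.1 - x'‖ ^ 2) 2 hfar)
  refine ⟨σstar, hσstar, fun σ hσ hσlt y hy => ?_⟩
  rw [← sub_pos, ← sum_sub_distrib]
  simp only [← sub_mul]
  refine sum_mul_pos_of_dominant_s17 hNP ?_ (fun p _ => ?_) (fun p _ => (exp_pos _).le)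
    (hsmall ⟨hσ, hσlt⟩)
  · simp only [if_neg (ho N hNP), if_neg (Ne.symm hy)]
    split_ifs <;> norm_num
  · linarith [neg_one_le_ite_sub_ite (p.2 = N.2) (o p.1 = N.2),
      ite_sub_ite_le_one (p.2 = y) (o p.1 = y)]
end
end
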